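/- For fixed x ≥ 0, the function g ↦ (1/2)·log₂(1 + x) − k_g(x) is nonincreasing on (0, ∞): if 0 < g₁ ≤ g₂ then k_{g₁}(x) ≤ k_{g₂}(x), hence (1/2)·log₂(1 + x) − k_{g₂}(x) ≤ (1/2)·log₂(1 + x) − k_{g₁}(x). In particular, over g ≥ 1 this gap is maximized at g = 1. -/

import Mathlib

/-!
With `c = 1/(g+1)`, `t = y* + c` and `h_g x = log (g (x + c))`, the function `2 log 2 · k_g` is
the line `x / t` up to `y*` and `h_g` beyond. The defining equation of `y*` says that this line
touches the concave `h_g` at `y*`, so it dominates `h_g`. Rewritten as `log g + c/t + log t = 1`,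
its left side increases in `g` (for `t > c`) and in `t ≥ c`, so `t` shrinks as `g` grows. Since
also `h_{g₁} ≤ h_{g₂}` pointwise, the two envelopes compare piece by piece; on `[y*(g₂), y*(g₁)]`
one uses that `h_{g₂}` has slope at least `1/t₁` there.
-/

open Real Set

section Tangent

variable {g c y x : ℝ}

theorem log_mul_add_le_div (hg : 0 < g) (hy : 0 < y + c)
    (htan : log (g * (y + c)) = y / (y + c)) (hx : 0 < x + c) :
    log (g * (x + c)) ≤ x / (y + c) := by
  have hsplit : log (g * (x + c)) = log (g * (y + c)) + log ((x + c) / (y + c)) := by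
    rw [← log_mul (by positivity) (by positivity)]
    congr 1
    field_simp
  have hlog := log_le_sub_one_of_pos (div_pos hx hy)
  calc log (g * (x + c)) ≤ y / (y + c) + ((x + c) / (y + c) - 1) := by linarith
    _ = x / (y + c) := by field_simp; ring

theorem div_add_div_le_log_mul_add (hg : 0 < g) (hy : 0 < y + c)
    (htan : log (g * (y + c)) = y / (y + c)) (hyx : y ≤ x) :
    y / (y + c) + (x - y) / (x + c) ≤ log (g * (x + c)) := by
  have hx : 0 < x + c := by linarith
  have hsplit : log (g * (x + c)) = log (g * (y + c)) + log ((x + c) / (y + c)) := by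
    rw [← log_mul (by positivity) (by positivity)]
    congr 1
    field_simp
  have hlog := one_sub_inv_le_log_of_pos (div_pos hx hy)
  calc y / (y + c) + (x - y) / (x + c) = y / (y + c) + (1 - ((x + c) / (y + c))⁻¹) := by
        field_simp; ring
    _ ≤ log (g * (x + c)) := by linarith

theorem log_add_div_eq_one_sub_log (hg : 0 < g) (hy : 0 < y + c)
    (htan : log (g * (y + c)) = y / (y + c)) :
    log (y + c) + c / (y + c) = 1 - log g := by
  rw [log_mul hg.ne' hy.ne'] at htan
  have : y / (y + c) = 1 - c / (y + c) := by field_simp; ring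
  linarith

end Tangent

theorem strictMonoOn_log_add_div {c : ℝ} (hc : 0 < c) :
    StrictMonoOn (fun t => log t + c / t) (Ici c) := by
  intro s hs t _ hst
  simp only [mem_Ici] at hs
  have hs0 : 0 < s := hc.trans_le hs
  have ht0 : 0 < t := hs0.trans hst
  have hlog := log_lt_sub_one_of_pos (div_pos hs0 ht0) (div_lt_one ht0 |>.mpr hst).ne
  rw [log_div hs0.ne' ht0.ne'] at hlog
  have hgap : 0 ≤ (t - s) * (s - c) / (s * t) := by
    apply div_nonneg <;> nlinarith
  have hid : (t - s) * (s - c) / (s * t) = (1 - s / t) - (c / s - c / t) := by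
    field_simp
  show log s + c / s < log t + c / t
  linarith

theorem log_add_div_le_log_add_div {g₁ g₂ t : ℝ} (hg₁ : 0 < g₁) (hg : g₁ ≤ g₂)
    (ht : 1 / (g₁ + 1) < t) :
    log g₁ + 1 / (g₁ + 1) / t ≤ log g₂ + 1 / (g₂ + 1) / t := by
  have hg₂ : 0 < g₂ := hg₁.trans_le hg
  have hlog : 1 - g₁ / g₂ ≤ log g₂ - log g₁ := by
    have := one_sub_inv_le_log_of_pos (div_pos hg₂ hg₁)
    rwa [log_div hg₂.ne' hg₁.ne', inv_div] at this
  have h1 : 1 < (g₁ + 1) * t := by rwa [div_lt_iff₀ (by positivity), mul_comm] at ht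
  have hd : 0 ≤ g₂ - g₁ := sub_nonneg.mpr hg
  have hc : 1 / (g₁ + 1) / t - 1 / (g₂ + 1) / t ≤ 1 - g₁ / g₂ :=
    calc 1 / (g₁ + 1) / t - 1 / (g₂ + 1) / t = (g₂ - g₁) / (g₂ + 1) / ((g₁ + 1) * t) := by
          field_simp; ring
      _ ≤ (g₂ - g₁) / (g₂ + 1) := div_le_self (by positivity) h1.le
      _ ≤ (g₂ - g₁) / g₂ := div_le_div_of_nonneg_left hd hg₂ (by linarith)
      _ = 1 - g₁ / g₂ := by field_simp
  linarith

theorem tangency_antitone {g₁ g₂ y₁ y₂ : ℝ} (hg₁ : 0 < g₁) (hg : g₁ ≤ g₂)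
    (hy₁ : 0 < y₁) (hy₂ : 0 < y₂)
    (htan₁ : log (g₁ * (y₁ + 1 / (g₁ + 1))) = y₁ / (y₁ + 1 / (g₁ + 1)))
    (htan₂ : log (g₂ * (y₂ + 1 / (g₂ + 1))) = y₂ / (y₂ + 1 / (g₂ + 1))) :
    y₂ + 1 / (g₂ + 1) ≤ y₁ + 1 / (g₁ + 1) := by
  have hg₂ : 0 < g₂ := hg₁.trans_le hg
  have hc₂ : 0 < 1 / (g₂ + 1) := by positivity
  have hc : 1 / (g₂ + 1) ≤ 1 / (g₁ + 1) := one_div_le_one_div_of_le (by positivity) (by linarith)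
  have hgain := log_add_div_le_log_add_div hg₁ hg (t := y₁ + 1 / (g₁ + 1)) (by linarith)
  refine ((strictMonoOn_log_add_div hc₂).le_iff_le ?_ ?_).mp ?_
  · simp only [mem_Ici]; linarith
  · simp only [mem_Ici]; linarith
  · linarith [log_add_div_eq_one_sub_log hg₁ (by positivity) htan₁,
      log_add_div_eq_one_sub_log hg₂ (by positivity) htan₂]

/-- `2 log 2 · k_g` with `y = y*(g)`: the envelope measured in nats. -/
noncomputable def logEnvelope (g y x : ℝ) : ℝ :=
  if x ≤ y then x / (y + 1 / (g + 1)) else log (g * (x + 1 / (g + 1)))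

theorem eq_logEnvelope_div {g y : ℝ} {k : ℝ → ℝ}
    (hlin : ∀ x : ℝ, 0 ≤ x → x ≤ y → k x = x / (2 * log 2 * (y + 1 / (g + 1))))
    (hlog : ∀ x : ℝ, y ≤ x → k x = (1 / 2) * logb 2 (g * x + g / (g + 1)))
    {x : ℝ} (hx : 0 ≤ x) :
    k x = logEnvelope g y x / (2 * log 2) := by
  unfold logEnvelope
  split_ifs with hxy
  · rw [hlin x hx hxy, div_div, mul_comm]
  · rw [hlog x (not_le.mp hxy).le, logb, show g * x + g / (g + 1) = g * (x + 1 / (g + 1)) by ring]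
    ring

theorem logEnvelope_le_div {g y x : ℝ} (hg : 0 < g) (hy : 0 < y)
    (htan : log (g * (y + 1 / (g + 1))) = y / (y + 1 / (g + 1))) (hx : 0 ≤ x) :
    logEnvelope g y x ≤ x / (y + 1 / (g + 1)) := by
  unfold logEnvelope
  split_ifs
  · exact le_rfl
  · exact log_mul_add_le_div hg (by positivity) htan (by positivity)

theorem log_mul_add_one_div_le {g₁ g₂ x : ℝ} (hg₁ : 0 < g₁) (hg : g₁ ≤ g₂) (hx : 0 ≤ x) :
    log (g₁ * (x + 1 / (g₁ + 1))) ≤ log (g₂ * (x + 1 / (g₂ + 1))) := by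
  have hg₂ : 0 < g₂ := hg₁.trans_le hg
  apply log_le_log (by positivity)
  have : g₁ / (g₁ + 1) ≤ g₂ / (g₂ + 1) := by
    rw [div_le_div_iff₀ (by positivity) (by positivity)]
    linarith
  calc g₁ * (x + 1 / (g₁ + 1)) = g₁ * x + g₁ / (g₁ + 1) := by ring
    _ ≤ g₂ * x + g₂ / (g₂ + 1) := by gcongr
    _ = g₂ * (x + 1 / (g₂ + 1)) := by ring

theorem logEnvelope_mono {g₁ g₂ y₁ y₂ x : ℝ} (hg₁ : 0 < g₁) (hg : g₁ ≤ g₂)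
    (hy₁ : 0 < y₁) (hy₂ : 0 < y₂)
    (htan₁ : log (g₁ * (y₁ + 1 / (g₁ + 1))) = y₁ / (y₁ + 1 / (g₁ + 1)))
    (htan₂ : log (g₂ * (y₂ + 1 / (g₂ + 1))) = y₂ / (y₂ + 1 / (g₂ + 1))) (hx : 0 ≤ x) :
    logEnvelope g₁ y₁ x ≤ logEnvelope g₂ y₂ x := by
  have hg₂ : 0 < g₂ := hg₁.trans_le hg
  have ht := tangency_antitone hg₁ hg hy₁ hy₂ htan₁ htan₂
  rcases le_or_gt x y₂ with hx₂ | hx₂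
  · calc logEnvelope g₁ y₁ x ≤ x / (y₁ + 1 / (g₁ + 1)) := logEnvelope_le_div hg₁ hy₁ htan₁ hx
      _ ≤ x / (y₂ + 1 / (g₂ + 1)) := div_le_div_of_nonneg_left hx (by positivity) ht
      _ = logEnvelope g₂ y₂ x := by rw [logEnvelope, if_pos hx₂]
  unfold logEnvelope
  rw [if_neg hx₂.not_ge]
  rcases le_or_gt x y₁ with hx₁ | hx₁
  · rw [if_pos hx₁]
    -- On `[y₂, x]` the slope of `log (g₂ (· + c₂))` is at least `1 / (x + c₂) ≥ 1 / t₁`.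
    calc x / (y₁ + 1 / (g₁ + 1)) = y₂ / (y₁ + 1 / (g₁ + 1)) + (x - y₂) / (y₁ + 1 / (g₁ + 1)) := by
          ring
      _ ≤ y₂ / (y₂ + 1 / (g₂ + 1)) + (x - y₂) / (x + 1 / (g₂ + 1)) := by gcongr
      _ ≤ log (g₂ * (x + 1 / (g₂ + 1))) :=
          div_add_div_le_log_mul_add hg₂ (by positivity) htan₂ hx₂.le
  · rw [if_neg hx₁.not_ge]
    exact log_mul_add_one_div_le hg₁ hg hx

/-- Monotonicity of the user-2 gap in the channel gain: for fixed `x ≥ 0`, if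
`0 < g₁ ≤ g₂` with corresponding envelope functions `k_{g₁}`, `k_{g₂}`, then
`k_{g₁} x ≤ k_{g₂} x`, hence
`(1/2) log₂ (1+x) − k_{g₂} x ≤ (1/2) log₂ (1+x) − k_{g₁} x`; in particular over
`g ≥ 1` the gap is maximized at `g = 1`. -/
theorem stmt_11 (g1 g2 : ℝ) (hg1 : 0 < g1) (hg12 : g1 ≤ g2)
    (c1 c2 : ℝ) (hc1 : c1 = 1 / (g1 + 1)) (hc2 : c2 = 1 / (g2 + 1))
    (ys1 : ℝ) (hys1 : 0 < ys1) (heq1 : Real.log (g1 * (ys1 + c1)) = ys1 / (ys1 + c1))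
    (ys2 : ℝ) (hys2 : 0 < ys2) (heq2 : Real.log (g2 * (ys2 + c2)) = ys2 / (ys2 + c2))
    (k1 k2 : ℝ → ℝ)
    (k1lin : ∀ x : ℝ, 0 ≤ x → x ≤ ys1 → k1 x = x / (2 * Real.log 2 * (ys1 + c1)))
    (k1log : ∀ x : ℝ, ys1 ≤ x → k1 x = (1 / 2) * Real.logb 2 (g1 * x + g1 / (g1 + 1)))
    (k2lin : ∀ x : ℝ, 0 ≤ x → x ≤ ys2 → k2 x = x / (2 * Real.log 2 * (ys2 + c2)))
    (k2log : ∀ x : ℝ, ys2 ≤ x → k2 x = (1 / 2) * Real.logb 2 (g2 * x + g2 / (g2 + 1))) :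
    ∀ x : ℝ, 0 ≤ x →
      k1 x ≤ k2 x ∧
      (1 / 2) * Real.logb 2 (1 + x) - k2 x ≤ (1 / 2) * Real.logb 2 (1 + x) - k1 x := by
  subst hc1 hc2
  intro x hx
  have hk : k1 x ≤ k2 x := by
    rw [eq_logEnvelope_div k1lin k1log hx, eq_logEnvelope_div k2lin k2log hx]
    gcongr
    exact logEnvelope_mono hg1 hg12 hys1 hys2 heq1 heq2 hx
  exact ⟨hk, by linarith⟩
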